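/- arXiv:2602.21960 — 6 statements merged into one kernel-verified Lean document; each statement's English description precedes it below -/
import Mathlib

section
/- The multiset projectivity relation on finite multisets of a poset P, defined by N << M iff there exists a surjective function f from M onto N with f(p) ≤ p for all p ∈ M, is a partial order (in particular antisymmetric). -/
/-!
Antisymmetry: let `U` be an up-set. If `N << M`, every element of `N` lying in `U` has a
nonempty fiber in `M` lying in `U`, so `N` has at most as many elements in `U` as `M`. Mutual
projectivity thus gives equal counts in `{x | a ≤ x}` and `{x | a < x}`, hence equal
multiplicities of every `a`.
-/

namespace Paper

/-- Multiset projectivity: `MProj r N M` (`N << M`) holds iff there is a surjective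
multiset map `f : M ↠ N` with `r (f p) p` for every occurrence `p` of `M`;
equivalently, `M` splits into nonempty fibers indexed by the occurrences of `N`. -/
def MProj {α : Type*} (r : α → α → Prop) (N M : Multiset α) : Prop :=
  ∃ L : Multiset (α × Multiset α),
    L.map Prod.fst = N ∧ (L.map Prod.snd).sum = M ∧
    ∀ x ∈ L, x.2 ≠ 0 ∧ ∀ p ∈ x.2, r x.1 p

/-- Multiset embeddability: `MEmbed r N M` (`N ⪯ M`) holds iff there is an injective
multiset map `g : N ↪ M` with `r q (g q)` for all `q ∈ N`; equivalently, `N` is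
related pointwise to a sub-multiset of `M`. -/
def MEmbed {α : Type*} (r : α → α → Prop) (N M : Multiset α) : Prop :=
  ∃ M' ≤ M, Multiset.Rel r N M'

theorem _root_.Multiset.exists_eq_add_of_map_eq_add {α β : Type*} {f : α → β}
    {s : Multiset α} {t u : Multiset β} (h : s.map f = t + u) :
    ∃ a b, s = a + b ∧ a.map f = t ∧ b.map f = u := by
  rw [← Multiset.rel_eq, Multiset.rel_map_left, Multiset.rel_add_right] at h
  obtain ⟨a, b, ha, hb, rfl⟩ := h
  exact ⟨a, b, rfl, Multiset.rel_eq.mp (Multiset.rel_map_left.mpr ha),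
    Multiset.rel_eq.mp (Multiset.rel_map_left.mpr hb)⟩

theorem _root_.Multiset.countP_le_eq_countP_lt_add_count {α : Type*} [PartialOrder α]
    [DecidableEq α] [DecidableLE α] [DecidableLT α] (a : α) (s : Multiset α) :
    s.countP (a ≤ ·) = s.countP (a < ·) + s.count a := by
  induction s using Multiset.induction with
  | empty => simp
  | cons b s ih =>
    rcases eq_or_ne a b with rfl | hab
    · simp [ih, add_assoc]
    · simp [Multiset.countP_cons, hab, hab.le_iff_lt, ih, add_right_comm]

section

variable {α : Type*} {r : α → α → Prop}

theorem mproj_zero_left {M : Multiset α} : MProj r 0 M ↔ M = 0 := by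
  constructor
  · rintro ⟨L, hL, rfl, -⟩
    simp [Multiset.map_eq_zero.mp hL]
  · rintro rfl
    exact ⟨0, by simp⟩

theorem mproj_singleton_left {a : α} {M : Multiset α} :
    MProj r {a} M ↔ M ≠ 0 ∧ ∀ p ∈ M, r a p := by
  constructor
  · rintro ⟨L, hL, rfl, hr⟩
    obtain ⟨x, rfl, rfl⟩ := Multiset.map_eq_singleton.mp hL
    simpa using hr
  · rintro hM
    exact ⟨{(a, M)}, by simpa using hM⟩

theorem mproj_add_left {N₁ N₂ M : Multiset α} :
    MProj r (N₁ + N₂) M ↔ ∃ M₁ M₂, M = M₁ + M₂ ∧ MProj r N₁ M₁ ∧ MProj r N₂ M₂ := by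
  constructor
  · rintro ⟨L, hL, rfl, hr⟩
    obtain ⟨L₁, L₂, rfl, hL₁, hL₂⟩ := Multiset.exists_eq_add_of_map_eq_add hL
    refine ⟨_, _, by rw [Multiset.map_add, Multiset.sum_add], ⟨L₁, hL₁, rfl, ?_⟩,
      ⟨L₂, hL₂, rfl, ?_⟩⟩ <;> intro x hx <;> exact hr x (by simp [hx])
  · rintro ⟨M₁, M₂, rfl, ⟨L₁, rfl, rfl, hr₁⟩, ⟨L₂, rfl, rfl, hr₂⟩⟩
    refine ⟨L₁ + L₂, by simp, by simp, ?_⟩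
    simp only [Multiset.mem_add]
    rintro x (hx | hx)
    exacts [hr₁ x hx, hr₂ x hx]

theorem mproj_cons_left {a : α} {N M : Multiset α} :
    MProj r (a ::ₘ N) M ↔ ∃ M₁ M₂, M = M₁ + M₂ ∧ MProj r {a} M₁ ∧ MProj r N M₂ := by
  rw [← Multiset.singleton_add, mproj_add_left]

theorem MProj.ne_zero {N M : Multiset α} (h : MProj r N M) (hN : N ≠ 0) : M ≠ 0 := by
  obtain ⟨a, ha⟩ := Multiset.exists_mem_of_ne_zero hN
  obtain ⟨N, rfl⟩ := Multiset.exists_cons_of_mem ha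
  obtain ⟨M₁, M₂, rfl, h₁, -⟩ := mproj_cons_left.mp h
  exact fun h0 => (mproj_singleton_left.mp h₁).1 (add_eq_zero.mp h0).1

theorem MProj.exists_rel_of_mem {N M : Multiset α} (h : MProj r N M) {p : α} (hp : p ∈ M) :
    ∃ q ∈ N, r q p := by
  obtain ⟨L, rfl, rfl, hr⟩ := h
  obtain ⟨s, hs, hps⟩ := Multiset.mem_join.mp hp
  obtain ⟨x, hx, rfl⟩ := Multiset.mem_map.mp hs
  exact ⟨x.1, Multiset.mem_map_of_mem _ hx, (hr x hx).2 p hps⟩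

theorem MProj.refl [Std.Refl r] (N : Multiset α) : MProj r N N := by
  induction N using Multiset.induction with
  | empty => exact mproj_zero_left.mpr rfl
  | cons a N ih =>
    refine mproj_cons_left.mpr ⟨{a}, N, rfl, mproj_singleton_left.mpr ⟨by simp, ?_⟩, ih⟩
    simpa using refl_of r a

theorem MProj.trans [IsTrans α r] {N M K : Multiset α} (hNM : MProj r N M)
    (hMK : MProj r M K) : MProj r N K := by
  induction N using Multiset.induction generalizing M K with
  | empty => rwa [mproj_zero_left.mp hNM] at hMK
  | cons a N ih =>
    obtain ⟨M₁, M₂, rfl, haM₁, hNM₂⟩ := mproj_cons_left.mp hNM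
    obtain ⟨K₁, K₂, rfl, hM₁K₁, hM₂K₂⟩ := mproj_add_left.mp hMK
    obtain ⟨hM₁, haM₁⟩ := mproj_singleton_left.mp haM₁
    refine mproj_cons_left.mpr ⟨K₁, K₂, rfl, mproj_singleton_left.mpr ⟨hM₁K₁.ne_zero hM₁, ?_⟩,
      ih hNM₂ hM₂K₂⟩
    intro p hp
    obtain ⟨q, hq, hqp⟩ := hM₁K₁.exists_rel_of_mem hp
    exact trans_of r (haM₁ q hq) hqp

theorem MProj.countP_le {N M : Multiset α} (h : MProj r N M) (p : α → Prop) [DecidablePred p]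
    (hp : ∀ a b, r a b → p a → p b) : N.countP p ≤ M.countP p := by
  induction N using Multiset.induction generalizing M with
  | empty => simp [mproj_zero_left.mp h]
  | cons a N ih =>
    obtain ⟨M₁, M₂, rfl, haM₁, hNM₂⟩ := mproj_cons_left.mp h
    obtain ⟨hM₁, haM₁⟩ := mproj_singleton_left.mp haM₁
    rw [Multiset.countP_cons, Multiset.countP_add]
    have hpM₁ : (if p a then 1 else 0) ≤ M₁.countP p := by
      split_ifs with hpa
      · rw [Multiset.countP_eq_card.mpr fun b hb => hp a b (haM₁ b hb) hpa]
        exact Multiset.card_pos.mpr hM₁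
      · exact Nat.zero_le _
    have hrest := ih hNM₂
    omega

end

theorem MProj.antisymm {α : Type*} [PartialOrder α] {N M : Multiset α}
    (hNM : MProj (· ≤ ·) N M) (hMN : MProj (· ≤ ·) M N) : N = M := by
  classical
  have hcountP (p : α → Prop) (hp : ∀ a b, a ≤ b → p a → p b) : N.countP p = M.countP p :=
    (hNM.countP_le p hp).antisymm (hMN.countP_le p hp)
  ext a
  have hle := hcountP (a ≤ ·) fun _ _ hbc hab => hab.trans hbc
  have hlt := hcountP (a < ·) fun _ _ hbc hab => hab.trans_le hbc
  rw [Multiset.countP_le_eq_countP_lt_add_count, Multiset.countP_le_eq_countP_lt_add_count] at hle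
  omega

/-- The multiset projectivity relation `<<` on finite multisets of a poset is a
partial order: reflexive, transitive, and antisymmetric. -/
theorem stmt_4 {P : Type*} [PartialOrder P] :
    (∀ N : Multiset P, MProj (· ≤ ·) N N) ∧
    (∀ N M K : Multiset P, MProj (· ≤ ·) N M → MProj (· ≤ ·) M K →
      MProj (· ≤ ·) N K) ∧
    (∀ N M : Multiset P, MProj (· ≤ ·) N M → MProj (· ≤ ·) M N → N = M) :=
  ⟨MProj.refl, fun _ _ _ => MProj.trans, fun _ _ => MProj.antisymm⟩

end Paper
end

section
/- If P is a well-order (a well-founded linear order), then P is a better partial order: there is no bad super-sequence for ≤. -/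
/-!
Removing the minimum of an infinite set `B` again and again gives `B = B₀ ⊇ B₁ ⊇ ⋯`, and the
members `sₙ ∈ F` that are initial segments of `Bₙ` satisfy `sₙ ◁ sₙ₊₁`. A bad super-sequence for
`≤` on a linear order is therefore strictly decreasing along `n ↦ f sₙ`, which is impossible in a
well-order.
-/

namespace Paper

/-- `s` is an initial segment of the finite set `t` (w.r.t. the increasing enumerations). -/
def InitSegF (s t : Finset ℕ) : Prop :=
  s ⊆ t ∧ ∀ a ∈ s, ∀ b ∈ t, b ∉ s → a < b

/-- The finite set `s` is an initial segment of the set `B ⊆ ℕ`. -/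
def InitSegS (s : Finset ℕ) (B : Set ℕ) : Prop :=
  ↑s ⊆ B ∧ ∀ a ∈ s, ∀ b ∈ B, b ∉ s → a < b

/-- `F` is a front on the infinite set `A ⊆ ℕ`. -/
def IsFront (F : Set (Finset ℕ)) (A : Set ℕ) : Prop :=
  A.Infinite ∧
  (F = {∅} ∨ (⋃ s ∈ F, (↑s : Set ℕ)) = A) ∧
  (∀ s ∈ F, ∀ t ∈ F, InitSegF s t → s = t) ∧
  (∀ B : Set ℕ, B ⊆ A → B.Infinite → ∃! s, s ∈ F ∧ InitSegS s B)

/-- `t` is a shift of `s`: `s ◁ t`. -/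
def Shift (s t : Finset ℕ) : Prop :=
  ∃ B : Set ℕ, B.Infinite ∧ InitSegS s B ∧ InitSegS t (B \ {sInf B})

/-- A super-sequence `f` on the front `F` is bad for the relation `r`
if `s ◁ t` implies `¬ r (f s) (f t)` for members of `F`. -/
def IsBadSuperSeq {α : Type*} (r : α → α → Prop) (F : Set (Finset ℕ))
    (f : Finset ℕ → α) : Prop :=
  ∀ s ∈ F, ∀ t ∈ F, Shift s t → ¬ r (f s) (f t)

/-- `r` is a better partial order: there is no bad super-sequence for `r`. -/
def IsBpo {α : Type*} (r : α → α → Prop) : Prop :=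
  ¬ ∃ (A : Set ℕ) (F : Set (Finset ℕ)) (f : Finset ℕ → α),
      IsFront F A ∧ IsBadSuperSeq r F f

def dropMin (B : Set ℕ) : Set ℕ := B \ {sInf B}

lemma iterate_dropMin_subset (A : Set ℕ) (n : ℕ) : dropMin^[n] A ⊆ A := by
  induction n with
  | zero => exact subset_rfl
  | succ n ih =>
    rw [Function.iterate_succ_apply']
    exact Set.sdiff_subset.trans ih

lemma iterate_dropMin_infinite {A : Set ℕ} (hA : A.Infinite) (n : ℕ) :
    (dropMin^[n] A).Infinite := by
  induction n with
  | zero => exact hA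
  | succ n ih =>
    rw [Function.iterate_succ_apply']
    exact ih.sdiff (Set.finite_singleton _)

lemma IsFront.exists_seq_shift {F : Set (Finset ℕ)} {A : Set ℕ} (hF : IsFront F A) :
    ∃ s : ℕ → Finset ℕ, (∀ n, s n ∈ F) ∧ ∀ n, Shift (s n) (s (n + 1)) := by
  obtain ⟨hA, -, -, hunique⟩ := hF
  choose s hsF hsInit using fun n =>
    (hunique _ (iterate_dropMin_subset A n) (iterate_dropMin_infinite hA n)).exists
  refine ⟨s, hsF, fun n => ⟨_, iterate_dropMin_infinite hA n, hsInit n, ?_⟩⟩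
  simpa only [Function.iterate_succ_apply', dropMin] using hsInit (n + 1)

lemma isBpo_of_forall_exists_rel_succ {α : Type*} {r : α → α → Prop}
    (hr : ∀ g : ℕ → α, ∃ n, r (g n) (g (n + 1))) : IsBpo r := by
  rintro ⟨A, F, f, hF, hbad⟩
  obtain ⟨s, hsF, hshift⟩ := hF.exists_seq_shift
  obtain ⟨n, hn⟩ := hr (f ∘ s)
  exact hbad _ (hsF n) _ (hsF (n + 1)) (hshift n) hn

/-- Every well-order (well-founded linear order) is a better partial order. -/
theorem stmt_7 {P : Type*} [LinearOrder P]
    (h : WellFounded ((· < ·) : P → P → Prop)) :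
    IsBpo ((· ≤ ·) : P → P → Prop) := by
  have : WellFoundedLT P := ⟨h⟩
  refine isBpo_of_forall_exists_rel_succ fun g => ?_
  obtain ⟨n, hn⟩ := WellFounded.not_rel_apply_succ (r := (· < ·)) g
  exact ⟨n, not_lt.mp hn⟩

end Paper
end

section
/- If P and Q are better partial orders, then the product poset P × Q with the componentwise order is a better partial order. -/
namespace Paper

/-!
Let `f` be a bad super-sequence into `P × Q` on a front `F`. The unions `s ∪ t` of shifts `s ◁ t`
in `F` form a thin family from which `s` and `t` can be read off, so the Nash-Williams partition
theorem (obtained from Galvin's lemma by combinatorial forcing) gives an infinite `N` on which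
either every shift satisfies `(f s).1 ≤ (f t).1` or none does. On the front `F` restricted to `N`,
the second components are then bad in the first case and the first components in the second.
-/

open Finset

def IsThin (F : Set (Finset ℕ)) : Prop :=
  ∀ s ∈ F, ∀ t ∈ F, InitSegF s t → s = t

lemma infinite_sep_forall_lt {X : Set ℕ} (hX : X.Infinite) (s : Finset ℕ) :
    {x ∈ X | ∀ a ∈ s, a < x}.Infinite :=
  (hX.sdiff (s.finite_toSet.biUnion fun a _ => Set.finite_Iic a)).mono fun _ hx =>
    ⟨hx.1, fun _ ha => not_le.1 fun h => hx.2 (Set.mem_biUnion ha h)⟩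

section InitialSegments

variable {s t u : Finset ℕ} {Z : Set ℕ}

lemma initSegS_empty (Z : Set ℕ) : InitSegS ∅ Z := by
  simp [InitSegS]

lemma initSegS_coe : InitSegS s ↑t ↔ InitSegF s t := by
  simp only [InitSegS, InitSegF, coe_subset, mem_coe]

lemma InitSegF.refl (s : Finset ℕ) : InitSegF s s :=
  ⟨subset_rfl, fun _ _ _ hb hb' => absurd hb hb'⟩

lemma InitSegF.trans (h₁ : InitSegF s t) (h₂ : InitSegF t u) : InitSegF s u := by
  refine ⟨h₁.1.trans h₂.1, fun a ha b hb hbs => ?_⟩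
  by_cases hbt : b ∈ t
  · exact h₁.2 a ha b hbt hbs
  · exact h₂.2 a (h₁.1 ha) b hb hbt

lemma InitSegF.erase (h : InitSegF s t) (m : ℕ) : InitSegF (s.erase m) (t.erase m) := by
  refine ⟨erase_subset_erase m h.1, fun a ha b hb hbs => ?_⟩
  rw [mem_erase] at ha hb
  exact h.2 a ha.2 b hb.2 fun hb' => hbs (mem_erase.2 ⟨hb.1, hb'⟩)

lemma InitSegS.initSegF_or_initSegF (hs : InitSegS s Z) (ht : InitSegS t Z) :
    InitSegF s t ∨ InitSegF t s := by
  by_cases hst : s ⊆ t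
  · exact Or.inl ⟨hst, fun a ha b hb hbs => hs.2 a ha b (ht.1 hb) hbs⟩
  · obtain ⟨a, has, hat⟩ := not_subset.1 hst
    have hts : t ⊆ s := fun b hbt => by
      by_contra hbs
      exact lt_asymm (hs.2 a has b (ht.1 hbt) hbs) (ht.2 b hbt a (hs.1 has) hat)
    exact Or.inr ⟨hts, fun c hc b hb hbt => ht.2 c hc b (hs.1 hb) hbt⟩

lemma InitSegS.insert_sInf (h : InitSegS s Z) (hne : (Z \ ↑s).Nonempty) :
    InitSegS (insert (sInf (Z \ ↑s)) s) Z := by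
  have hm : sInf (Z \ ↑s) ∈ Z \ ↑s := Nat.sInf_mem hne
  refine ⟨by rw [coe_insert]; exact Set.insert_subset hm.1 h.1, fun a ha b hb hba => ?_⟩
  have hbs : b ∉ s := fun hbs => hba (mem_insert_of_mem hbs)
  obtain rfl | ha := mem_insert.1 ha
  · exact lt_of_le_of_ne (Nat.sInf_le ⟨hb, hbs⟩) fun e => hba (e ▸ mem_insert_self _ _)
  · exact h.2 a ha b hb hbs

lemma IsThin.eq_of_initSegS {F : Set (Finset ℕ)} (hF : IsThin F) (hs : s ∈ F) (ht : t ∈ F)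
    (hsZ : InitSegS s Z) (htZ : InitSegS t Z) : s = t :=
  (hsZ.initSegF_or_initSegF htZ).elim (hF s hs t ht) fun h => (hF t ht s hs h).symm

end InitialSegments

section Forcing

variable (𝓑 : Set (Finset ℕ))

def Accepts (s : Finset ℕ) (X : Set ℕ) : Prop :=
  ∀ Z : Set ℕ, Z.Infinite → InitSegS s Z → Z \ ↑s ⊆ X → ∃ v ∈ 𝓑, InitSegS v Z

def Rejects (s : Finset ℕ) (X : Set ℕ) : Prop :=
  ∀ Y ⊆ X, Y.Infinite → ¬ Accepts 𝓑 s Y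

def Decides (s : Finset ℕ) (X : Set ℕ) : Prop :=
  Accepts 𝓑 s X ∨ Rejects 𝓑 s X

variable {𝓑} {s : Finset ℕ} {X Y : Set ℕ}

lemma accepts_of_mem (hs : s ∈ 𝓑) (X : Set ℕ) : Accepts 𝓑 s X :=
  fun _ _ hsZ _ => ⟨s, hs, hsZ⟩

lemma Accepts.of_subset_above (hYX : ∀ y ∈ Y, (∀ a ∈ s, a < y) → y ∈ X)
    (h : Accepts 𝓑 s X) : Accepts 𝓑 s Y :=
  fun Z hZ hsZ hZY => h Z hZ hsZ fun z hz =>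
    hYX z (hZY hz) fun a ha => hsZ.2 a ha z hz.1 hz.2

lemma Rejects.of_subset_above (hYX : ∀ y ∈ Y, (∀ a ∈ s, a < y) → y ∈ X)
    (h : Rejects 𝓑 s X) : Rejects 𝓑 s Y := fun W hWY hW hacc =>
  h {w ∈ W | ∀ a ∈ s, a < w} (fun w hw => hYX w (hWY hw.1) hw.2) (infinite_sep_forall_lt hW s)
    (hacc.of_subset_above fun _ hw _ => hw.1)

lemma Decides.of_subset_above (hYX : ∀ y ∈ Y, (∀ a ∈ s, a < y) → y ∈ X)
    (h : Decides 𝓑 s X) : Decides 𝓑 s Y :=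
  h.imp (Accepts.of_subset_above hYX) (Rejects.of_subset_above hYX)

lemma exists_decides (s : Finset ℕ) (hX : X.Infinite) :
    ∃ Y ⊆ X, Y.Infinite ∧ Decides 𝓑 s Y := by
  by_cases h : Rejects 𝓑 s X
  · exact ⟨X, subset_rfl, hX, Or.inr h⟩
  · simp only [Rejects, not_forall, not_not] at h
    obtain ⟨Y, hYX, hY, hacc⟩ := h
    exact ⟨Y, hYX, hY, Or.inl hacc⟩

lemma Rejects.finite_setOf_accepts_insert (h : Rejects 𝓑 s X) :
    {m ∈ X | Accepts 𝓑 (insert m s) X}.Finite := by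
  refine Set.not_infinite.1 fun hinf => h _ (fun m hm => hm.1) hinf ?_
  intro Z hZ hsZ hZs
  have hne : (Z \ ↑s).Nonempty := (hZ.sdiff s.finite_toSet).nonempty
  refine (hZs (Nat.sInf_mem hne)).2 Z hZ (hsZ.insert_sInf hne) fun z hz => ?_
  exact (hZs ⟨hz.1, fun hzs => hz.2 (mem_insert_of_mem hzs)⟩).1

end Forcing

section Fusion

variable {P : Finset ℕ → Set ℕ → Prop}

lemma exists_forall_mem_finset
    (htail : ∀ s X Y, (∀ y ∈ Y, (∀ a ∈ s, a < y) → y ∈ X) → P s X → P s Y)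
    (hex : ∀ s X, X.Infinite → ∃ Y ⊆ X, Y.Infinite ∧ P s Y)
    (L : Finset (Finset ℕ)) {X : Set ℕ} (hX : X.Infinite) :
    ∃ Y ⊆ X, Y.Infinite ∧ ∀ s ∈ L, P s Y := by
  classical
  induction L using Finset.induction_on with
  | empty => exact ⟨X, subset_rfl, hX, by simp⟩
  | insert s L _ ih =>
    obtain ⟨Y, hYX, hY, hPY⟩ := ih
    obtain ⟨W, hWY, hW, hPW⟩ := hex s Y hY
    refine ⟨W, hWY.trans hYX, hW, fun t ht => ?_⟩
    obtain rfl | ht := mem_insert.1 ht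
    · exact hPW
    · exact htail t Y W (fun w hw _ => hWY hw) (hPY t ht)

theorem exists_infinite_forall_subset
    (htail : ∀ s X Y, (∀ y ∈ Y, (∀ a ∈ s, a < y) → y ∈ X) → P s X → P s Y)
    (hex : ∀ s X, X.Infinite → ∃ Y ⊆ X, Y.Infinite ∧ P s Y) {M : Set ℕ} (hM : M.Infinite) :
    ∃ N ⊆ M, N.Infinite ∧ ∀ s : Finset ℕ, ↑s ⊆ N → P s N := by
  -- Each step takes care of all subsets of `{0, …, min X}` at once, so that it needs no memory
  -- of the earlier steps; `N` collects the minima `n 1 < n 2 < ⋯`.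
  have hstep : ∀ X : {X : Set ℕ // X.Infinite}, ∃ Y : {Y : Set ℕ // Y.Infinite},
      Y.1 ⊆ {y ∈ X.1 | sInf X.1 < y} ∧ ∀ t ⊆ range (sInf X.1 + 1), P t Y.1 := by
    rintro ⟨X, hX⟩
    obtain ⟨Y, hYX, hY, hPY⟩ := exists_forall_mem_finset htail hex (range (sInf X + 1)).powerset
      (by simpa using infinite_sep_forall_lt hX {sInf X})
    exact ⟨⟨Y, hY⟩, hYX, fun t ht => hPY t (mem_powerset.2 ht)⟩
  choose next hnext_sub hnext_P using hstep
  set X : ℕ → Set ℕ := fun k => (next^[k] ⟨M, hM⟩).1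
  set n : ℕ → ℕ := fun k => sInf (X k)
  have hX_succ_sub : ∀ k, X (k + 1) ⊆ {y ∈ X k | n k < y} := fun k => by
    simp only [X, n, Function.iterate_succ_apply']
    exact hnext_sub _
  have hP_succ : ∀ k, ∀ t ⊆ range (n k + 1), P t (X (k + 1)) := fun k => by
    simp only [X, n, Function.iterate_succ_apply']
    exact hnext_P _
  have hX_anti : Antitone X := antitone_nat_of_succ_le fun k _ hy => (hX_succ_sub k hy).1
  have hn_mem : ∀ k, n k ∈ X k := fun k => Nat.sInf_mem (next^[k] ⟨M, hM⟩).2.nonempty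
  have hn_mono : StrictMono n :=
    strictMono_nat_of_lt_succ fun k => (hX_succ_sub k (hn_mem (k + 1))).2
  refine ⟨Set.range fun k => n (k + 1), ?_,
    Set.infinite_range_of_injective (hn_mono.injective.comp Nat.succ_injective), fun s hs => ?_⟩
  · rintro _ ⟨k, rfl⟩
    exact hX_anti (Nat.zero_le _) (hn_mem _)
  obtain ⟨k, hsk, hk⟩ : ∃ k, (∀ a ∈ s, a ≤ n k) ∧ ∀ i, (∀ a ∈ s, a < n (i + 1)) → k ≤ i := by
    rcases s.eq_empty_or_nonempty with rfl | hne
    · exact ⟨0, by simp, fun i _ => Nat.zero_le i⟩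
    · obtain ⟨k, hk : n (k + 1) = s.max' hne⟩ := hs (s.max'_mem hne)
      refine ⟨k + 1, fun a ha => (s.le_max' a ha).trans hk.ge, fun i hi => ?_⟩
      have := hi _ (s.max'_mem hne)
      rw [← hk, hn_mono.lt_iff_lt] at this
      omega
  refine htail s (X (k + 1)) _ ?_
    (hP_succ k s fun a ha => mem_range.2 (Nat.lt_succ_of_le (hsk a ha)))
  rintro _ ⟨i, rfl⟩ hi
  exact hX_anti (Nat.succ_le_succ (hk i hi)) (hn_mem _)

end Fusion

theorem exists_infinite_decides (𝓑 : Set (Finset ℕ)) {M : Set ℕ} (hM : M.Infinite) :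
    ∃ N ⊆ M, N.Infinite ∧ ∀ s : Finset ℕ, ↑s ⊆ N → Decides 𝓑 s N :=
  exists_infinite_forall_subset (fun _ _ _ hYX h => h.of_subset_above hYX)
    (fun s _ hX => exists_decides s hX) hM

theorem exists_infinite_rejects {𝓑 : Set (Finset ℕ)} {N : Set ℕ} (hN : N.Infinite)
    (hdec : ∀ s : Finset ℕ, ↑s ⊆ N → Decides 𝓑 s N) (hrej : Rejects 𝓑 ∅ N) :
    ∃ N' ⊆ N, N'.Infinite ∧ ∀ s : Finset ℕ, ↑s ⊆ N' → Rejects 𝓑 s N := by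
  obtain ⟨N', hN'N, hN', hext⟩ := exists_infinite_forall_subset
    (P := fun s Y => Rejects 𝓑 s N → ∀ m ∈ Y, m ∈ N → (∀ a ∈ s, a < m) →
      ¬ Accepts 𝓑 (insert m s) N)
    (fun _ _ _ hYX hX hs m hm hmN hsm => hX hs m (hYX m hm hsm) hmN hsm)
    (fun s X hX => by
      by_cases hs : Rejects 𝓑 s N
      · refine ⟨X \ {m ∈ N | Accepts 𝓑 (insert m s) N}, Set.sdiff_subset,
          hX.sdiff hs.finite_setOf_accepts_insert, fun _ m hm hmN _ hacc => hm.2 ⟨hmN, hacc⟩⟩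
      · exact ⟨X, subset_rfl, hX, fun h => absurd h hs⟩) hN
  refine ⟨N', hN'N, hN', fun s => ?_⟩
  induction s using Finset.induction_on_max with
  | empty => exact fun _ => hrej
  | insert m s hsm ih =>
    intro hs
    rw [coe_insert, Set.insert_subset_iff] at hs
    have hsN : ↑(insert m s) ⊆ N := by
      rw [coe_insert]
      exact Set.insert_subset (hN'N hs.1) (hs.2.trans hN'N)
    exact (hdec _ hsN).resolve_left (hext s hs.2 (ih hs.2) m hs.1 (hN'N hs.1) hsm)

theorem galvin (𝓑 : Set (Finset ℕ)) {M : Set ℕ} (hM : M.Infinite) :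
    ∃ N ⊆ M, N.Infinite ∧
      ((∀ u ∈ 𝓑, ¬ ↑u ⊆ N) ∨ ∀ Z ⊆ N, Z.Infinite → ∃ v ∈ 𝓑, InitSegS v Z) := by
  obtain ⟨N, hNM, hN, hdec⟩ := exists_infinite_decides 𝓑 hM
  rcases hdec ∅ (by simp) with hacc | hrej
  · exact ⟨N, hNM, hN, Or.inr fun Z hZN hZ => hacc Z hZ (initSegS_empty Z) (by simpa using hZN)⟩
  · obtain ⟨N', hN'N, hN', hrej'⟩ := exists_infinite_rejects hN hdec hrej
    exact ⟨N', hN'N.trans hNM, hN',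
      Or.inl fun u hu huN' => hrej' u huN' N subset_rfl hN (accepts_of_mem hu N)⟩

theorem IsThin.exists_homogeneous {U : Set (Finset ℕ)} (hU : IsThin U) (c : Finset ℕ → Prop)
    {M : Set ℕ} (hM : M.Infinite) :
    ∃ N ⊆ M, N.Infinite ∧ ((∀ u ∈ U, ↑u ⊆ N → c u) ∨ ∀ u ∈ U, ↑u ⊆ N → ¬ c u) := by
  obtain ⟨N, hNM, hN, hnone | hall⟩ := galvin {u ∈ U | c u} hM
  · exact ⟨N, hNM, hN, Or.inr fun u hu huN hc => hnone u ⟨hu, hc⟩ huN⟩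
  refine ⟨N, hNM, hN, Or.inl fun u hu huN => ?_⟩
  -- `u` starts `u ∪ (N above u)`, and by thinness it is the only member of `U` that does.
  set Z := ↑u ∪ {x ∈ N | ∀ a ∈ u, a < x}
  have huZ : InitSegS u Z :=
    ⟨Set.subset_union_left, fun a ha b hb hbu => (hb.resolve_left hbu).2 a ha⟩
  obtain ⟨v, ⟨hvU, hcv⟩, hvZ⟩ := hall Z (Set.union_subset huN fun _ hx => hx.1)
    ((infinite_sep_forall_lt hN u).mono Set.subset_union_right)
  rwa [hU.eq_of_initSegS hu hvU huZ hvZ]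

section Fronts

variable {F : Set (Finset ℕ)} {A : Set ℕ} {s t s' t' : Finset ℕ}

lemma IsFront.isThin (hF : IsFront F A) : IsThin F :=
  hF.2.2.1

lemma IsFront.restrict (hF : IsFront F A) (hne : ∅ ∉ F) {N : Set ℕ} (hNA : N ⊆ A)
    (hN : N.Infinite) : IsFront {s ∈ F | ↑s ⊆ N} N := by
  refine ⟨hN, Or.inr ?_, fun s hs t ht => hF.isThin s hs.1 t ht.1, fun B hBN hB => ?_⟩
  · refine Set.Subset.antisymm (Set.iUnion₂_subset fun s hs => hs.2) fun x hx => ?_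
    obtain ⟨s, ⟨hsF, hsC⟩, -⟩ :=
      hF.2.2.2 (insert x {y ∈ N | x < y}) (Set.insert_subset (hNA hx) fun y hy => hNA hy.1)
        ((by simpa using infinite_sep_forall_lt hN {x} : Set.Infinite _).mono
          (Set.subset_insert _ _))
    obtain ⟨a, ha⟩ := nonempty_iff_ne_empty.2 fun h => hne (h ▸ hsF)
    have hxs : x ∈ s := by
      by_contra hxs
      obtain rfl | hax := hsC.1 ha
      · exact hxs ha
      · exact lt_asymm hax.2 (hsC.2 a ha x (Set.mem_insert x _) hxs)
    exact Set.mem_biUnion ⟨hsF, hsC.1.trans (Set.insert_subset hx fun y hy => hy.1)⟩ hxs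
  · obtain ⟨s, ⟨hsF, hsB⟩, huniq⟩ := hF.2.2.2 B (hBN.trans hNA) hB
    exact ⟨s, ⟨⟨hsF, hsB.1.trans hBN⟩, hsB⟩, fun s' hs' => huniq s' ⟨hs'.1.1, hs'.2⟩⟩

lemma Shift.initSegF_union (h : Shift s t) : InitSegF s (s ∪ t) := by
  obtain ⟨B, -, hsB, htB⟩ := h
  exact ⟨subset_union_left, fun a ha b hb hbs =>
    hsB.2 a ha b (htB.1 ((mem_union.1 hb).resolve_left hbs)).1 hbs⟩

lemma Shift.initSegF_union_erase_min' (h : Shift s t) (hs : s.Nonempty) :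
    InitSegF t ((s ∪ t).erase (s.min' hs)) := by
  obtain ⟨B, hB, hsB, htB⟩ := h
  -- the shift drops the least element of `B`, and `s` starts with it
  have hmin : s.min' hs = sInf B := by
    have hle : sInf B ≤ s.min' hs := Nat.sInf_le (hsB.1 (s.min'_mem hs))
    have hmem : sInf B ∈ s := by
      by_contra hn
      exact absurd (hsB.2 _ (s.min'_mem hs) _ (Nat.sInf_mem hB.nonempty) hn) (not_lt.2 hle)
    exact le_antisymm (s.min'_le _ hmem) hle
  rw [hmin]
  refine ⟨fun x hx => mem_erase.2 ⟨(htB.1 hx).2, mem_union_right s hx⟩,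
    fun a ha b hb hbt => htB.2 a ha b ⟨hsB.1 ?_, (mem_erase.1 hb).1⟩ hbt⟩
  exact (mem_union.1 (mem_erase.1 hb).2).resolve_right hbt

lemma IsThin.eq_and_eq_of_shift (hF : IsThin F) (hne : ∅ ∉ F) (hs : s ∈ F) (ht : t ∈ F)
    (hs' : s' ∈ F) (ht' : t' ∈ F) (hst : Shift s t) (hst' : Shift s' t')
    (h : InitSegF (s ∪ t) (s' ∪ t')) : s = s' ∧ t = t' := by
  obtain rfl : s = s' := hF.eq_of_initSegS hs hs' (initSegS_coe.2 (hst.initSegF_union.trans h))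
    (initSegS_coe.2 hst'.initSegF_union)
  have hsne : s.Nonempty := nonempty_iff_ne_empty.2 fun h => hne (h ▸ hs)
  exact ⟨rfl, hF.eq_of_initSegS ht ht'
    (initSegS_coe.2 ((hst.initSegF_union_erase_min' hsne).trans (h.erase _)))
    (initSegS_coe.2 (hst'.initSegF_union_erase_min' hsne))⟩

def shiftUnions (F : Set (Finset ℕ)) : Set (Finset ℕ) :=
  {u | ∃ s ∈ F, ∃ t ∈ F, Shift s t ∧ s ∪ t = u}

lemma IsThin.shiftUnions (hF : IsThin F) (hne : ∅ ∉ F) : IsThin (shiftUnions F) := by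
  rintro _ ⟨s, hs, t, ht, hst, rfl⟩ _ ⟨s', hs', t', ht', hst', rfl⟩ h
  obtain ⟨rfl, rfl⟩ := hF.eq_and_eq_of_shift hne hs ht hs' ht' hst hst' h
  rfl

theorem IsFront.exists_shift_homogeneous (hF : IsFront F A) (hne : ∅ ∉ F)
    (R : Finset ℕ → Finset ℕ → Prop) :
    ∃ N ⊆ A, N.Infinite ∧
      ((∀ s ∈ F, ∀ t ∈ F, ↑s ⊆ N → ↑t ⊆ N → Shift s t → R s t) ∨
        ∀ s ∈ F, ∀ t ∈ F, ↑s ⊆ N → ↑t ⊆ N → Shift s t → ¬ R s t) := by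
  obtain ⟨N, hNA, hN, hc⟩ := (hF.isThin.shiftUnions hne).exists_homogeneous
    (fun u => ∃ s ∈ F, ∃ t ∈ F, Shift s t ∧ s ∪ t = u ∧ R s t) hF.1
  refine ⟨N, hNA, hN, hc.imp (fun hall s hs t ht hsN htN hst => ?_)
    fun hnone s hs t ht hsN htN hst hR => ?_⟩
  · obtain ⟨s', hs', t', ht', hst', he, hR⟩ := hall (s ∪ t) ⟨s, hs, t, ht, hst, rfl⟩
      (by rw [coe_union]; exact Set.union_subset hsN htN)
    obtain ⟨rfl, rfl⟩ := hF.isThin.eq_and_eq_of_shift hne hs' ht' hs ht hst' hst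
      (he ▸ InitSegF.refl _)
    exact hR
  · exact hnone (s ∪ t) ⟨s, hs, t, ht, hst, rfl⟩
      (by rw [coe_union]; exact Set.union_subset hsN htN) ⟨s, hs, t, ht, hst, rfl, hR⟩

end Fronts

lemma IsBpo.refl {α : Type*} {r : α → α → Prop} (h : IsBpo r) (a : α) : r a a := by
  by_contra ha
  refine h ⟨Set.univ, {∅}, fun _ => a, ⟨Set.infinite_univ, Or.inl rfl, ?_, ?_⟩, fun _ _ _ _ _ => ha⟩
  · rintro s rfl t rfl -
    rfl
  · exact fun B _ _ => ⟨∅, ⟨rfl, initSegS_empty B⟩, fun s hs => hs.1⟩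

lemma IsBadSuperSeq.empty_notMem {α : Type*} {r : α → α → Prop} {F : Set (Finset ℕ)}
    {f : Finset ℕ → α} (hf : IsBadSuperSeq r F f) (hr : ∀ a, r a a) : ∅ ∉ F := fun h =>
  hf ∅ h ∅ h ⟨Set.univ, Set.infinite_univ, initSegS_empty _, initSegS_empty _⟩ (hr _)

theorem IsBpo.prod {α β : Type*} {r : α → α → Prop} {q : β → β → Prop} (hr : IsBpo r)
    (hq : IsBpo q) : IsBpo fun x y : α × β => r x.1 y.1 ∧ q x.2 y.2 := by
  rintro ⟨A, F, f, hF, hf⟩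
  have hne : ∅ ∉ F := hf.empty_notMem fun x => ⟨hr.refl x.1, hq.refl x.2⟩
  obtain ⟨N, hNA, hN, hfst | hfst⟩ := hF.exists_shift_homogeneous hne fun s t => r (f s).1 (f t).1
  · exact hq ⟨N, _, fun s => (f s).2, hF.restrict hne hNA hN, fun s hs t ht hst hsnd =>
      hf s hs.1 t ht.1 hst ⟨hfst s hs.1 t ht.1 hs.2 ht.2 hst, hsnd⟩⟩
  · exact hr ⟨N, _, fun s => (f s).1, hF.restrict hne hNA hN, fun s hs t ht hst =>
      hfst s hs.1 t ht.1 hs.2 ht.2 hst⟩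

/-- The product of two better partial orders, with the componentwise order,
is a better partial order. -/
theorem stmt_9 {P Q : Type*} [PartialOrder P] [PartialOrder Q]
    (hP : IsBpo ((· ≤ ·) : P → P → Prop))
    (hQ : IsBpo ((· ≤ ·) : Q → Q → Prop)) :
    IsBpo ((· ≤ ·) : P × Q → P × Q → Prop) :=
  hP.prod hQ

end Paper
end

section
/- For positive integers n ≤ m, the n-comb order-embeds into the m-comb, and for n < m the m-comb does not order-embed into the n-comb. -/
namespace Paper

/-- A finite relational structure (finite set with a binary relation `le`). -/
structure FinOrd : Type 1 where
  carrier : Type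
  fin : Finite carrier
  le : carrier → carrier → Prop

/-- `X` is a partial order. -/
def FinOrd.IsPO (X : FinOrd) : Prop :=
  (∀ a, X.le a a) ∧ (∀ a b c, X.le a b → X.le b c → X.le a c) ∧
  (∀ a b, X.le a b → X.le b a → a = b)

/-- `X` is a co-tree: a poset with a greatest element whose principal upsets are chains. -/
def FinOrd.IsCoTree (X : FinOrd) : Prop :=
  X.IsPO ∧ (∃ t, ∀ a, X.le a t) ∧
  (∀ a b c, X.le a b → X.le a c → X.le b c ∨ X.le c b)

/-- The order of the `n`-comb: `inl i` is the spine point `c_{i+1}`,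
`inr i` is the tooth `c_{i+1}'`. -/
def combLE (n : ℕ) : Fin n ⊕ Fin n → Fin n ⊕ Fin n → Prop
  | Sum.inl i, Sum.inl j => i ≤ j
  | Sum.inr i, Sum.inl j => i ≤ j
  | Sum.inr i, Sum.inr j => i = j
  | Sum.inl _, Sum.inr _ => False

/-- The `n`-comb. -/
def comb (n : ℕ) : FinOrd := ⟨Fin n ⊕ Fin n, inferInstance, combLE n⟩

/-- `C` order-embeds into `X`. -/
def Embeds (C X : FinOrd) : Prop :=
  ∃ f : C.carrier → X.carrier, Function.Injective f ∧
    ∀ a b, C.le a b ↔ X.le (f a) (f b)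

/-- `C` order-embeds into the subset `S` of `X`. -/
def EmbedsIn (C X : FinOrd) (S : Set X.carrier) : Prop :=
  ∃ f : C.carrier → X.carrier, Function.Injective f ∧ (∀ a, f a ∈ S) ∧
    ∀ a b, C.le a b ↔ X.le (f a) (f b)

/-- Order isomorphism of `FinOrd`s. -/
def Iso (X Y : FinOrd) : Prop :=
  ∃ f : X.carrier ≃ Y.carrier, ∀ a b, X.le a b ↔ Y.le (f a) (f b)

/-- The order of `τ(m,k)`: `inl i` is `x_i` (so `x_0 > x_1 > ⋯ > x_m`), and
`inr i` is the minimal point `y_i` lying below every `x_j`. -/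
def tauLE (m k : ℕ) : Fin (m+1) ⊕ Fin (k+1) → Fin (m+1) ⊕ Fin (k+1) → Prop
  | Sum.inl i, Sum.inl j => j ≤ i
  | Sum.inr _, Sum.inl _ => True
  | Sum.inr i, Sum.inr j => i = j
  | Sum.inl _, Sum.inr _ => False

/-- The co-tree `τ(m,k)`: a chain `x_0 > ⋯ > x_m` with `k+1` pairwise incomparable
minimal points `y_0, …, y_k` immediately below `x_m`. -/
def tau (m k : ℕ) : FinOrd := ⟨Fin (m+1) ⊕ Fin (k+1), inferInstance, tauLE m k⟩

/-- `f : X → Y` is a bi-p-morphism. -/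
def IsBiPMorphism (X Y : FinOrd) (f : X.carrier → Y.carrier) : Prop :=
  (∀ a b, X.le a b → Y.le (f a) (f b)) ∧
  (∀ a y, Y.le (f a) y → ∃ z, X.le a z ∧ f z = y) ∧
  (∀ a y, Y.le y (f a) → ∃ z, X.le z a ∧ f z = y)

/-- `Y ≤ₚ X`: `Y` is a bi-p-morphic image of `X`. -/
def PImage (Y X : FinOrd) : Prop :=
  ∃ f : X.carrier → Y.carrier, Function.Surjective f ∧ IsBiPMorphism X Y f

/-- `x` is an immediate predecessor of `z` in `X`. -/
def ImmPred (X : FinOrd) (x z : X.carrier) : Prop :=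
  X.le x z ∧ x ≠ z ∧ ∀ w, X.le x w → X.le w z → w = x ∨ w = z

theorem Embeds.card_le {C X : FinOrd} (h : Embeds C X) :
    Nat.card C.carrier ≤ Nat.card X.carrier :=
  have := X.fin
  have ⟨_, hf, _⟩ := h
  Nat.card_le_card_of_injective _ hf

theorem card_comb (n : ℕ) : Nat.card (comb n).carrier = 2 * n := by
  change Nat.card (Fin n ⊕ Fin n) = 2 * n
  rw [Nat.card_sum, Nat.card_fin, two_mul]

theorem comb_embeds_comb {n m : ℕ} (h : n ≤ m) : Embeds (comb n) (comb m) := by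
  refine ⟨Sum.map (Fin.castLE h) (Fin.castLE h),
    (Fin.castLE_injective h).sumMap (Fin.castLE_injective h), ?_⟩
  rintro (a | a) (b | b) <;>
    simp only [comb, Sum.map_inl, Sum.map_inr, combLE, Fin.le_def, Fin.val_castLE, Fin.ext_iff]

theorem not_comb_embeds_comb {n m : ℕ} (h : n < m) : ¬ Embeds (comb m) (comb n) := by
  intro hmn
  have hcard := hmn.card_le
  rw [card_comb, card_comb] at hcard
  omega

theorem stmt_12_general (n m : ℕ) :
    (n ≤ m → Embeds (comb n) (comb m)) ∧
    (n < m → ¬ Embeds (comb m) (comb n)) :=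
  ⟨comb_embeds_comb, not_comb_embeds_comb⟩

/-- For positive `n ≤ m` the `n`-comb order-embeds into the `m`-comb, and for
`n < m` the `m`-comb does not order-embed into the `n`-comb. -/
theorem stmt_12 (n m : ℕ) (hn : 1 ≤ n) :
    (n ≤ m → Embeds (comb n) (comb m)) ∧
    (n < m → ¬ Embeds (comb m) (comb n)) :=
  stmt_12_general n m

end Paper
end

section
/- Let n ≥ 1. A finite co-tree X admits no order embedding of the (n+1)-comb if and only if X decomposes as a chain x_0 > x_1 > ... > x_m together with principal downsets ↓y_0, ..., ↓y_k where {y_0,...,y_k} is the set of immediate predecessors of x_m, x_m is the greatest element with more than one immediate predecessor (or the minimum if X is a chain), and each co-tree ↓y_i admits no order embedding of the n-comb. -/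
/-!
Let `p` be the greatest point with two lower covers, or the bottom if there is none. Any two
incomparable points lie below a point with two lower covers (a minimal common upper bound), so
every point is comparable with `p`: the co-tree is the chain `↑p` together with the downsets of the
lower covers of `p`. If one of these downsets `↓z` contains an `n`-comb, putting `p` on top of its
spine and a second lower cover of `p` as a new tooth gives an `(n+1)`-comb. Conversely, in an
`(n+1)`-comb the spine point `c_n` is incomparable with the last tooth, so it is not in the chain
`↑p`; hence `c_n`, and with it the `n`-comb below it, lies below a single lower cover of `p`.
-/

namespace Paper

/-- `z` has more than one immediate predecessor in `X`. -/
def TwoPreds (X : FinOrd) (z : X.carrier) : Prop :=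
  ∃ w w', w ≠ w' ∧ ImmPred X w z ∧ ImmPred X w' z

end Paper

section PartialOrder

variable {α : Type*} [PartialOrder α]

theorem IsChain.exists_fin_enum {s : Set α} (hs : IsChain (· ≤ ·) s) (hfin : s.Finite)
    (hne : s.Nonempty) :
    ∃ (m : ℕ) (x : Fin (m+1) → α), (∀ i j, x i ≤ x j ↔ j ≤ i) ∧ Set.range x = s := by
  classical
  let := hs.linearOrder
  have := hfin.fintype
  obtain ⟨m, hm⟩ := Nat.exists_eq_add_one.mpr (Fintype.card_pos_iff.mpr hne.to_subtype)
  set e := monoEquivOfFin s hm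
  refine ⟨m, fun i => (e i.rev : α), fun i j => e.le_iff_le.trans Fin.rev_le_rev, ?_⟩
  ext a
  refine ⟨?_, fun ha => ⟨(e.symm ⟨a, ha⟩).rev, by simp⟩⟩
  rintro ⟨i, rfl⟩
  exact (e i.rev).2

theorem CovBy.not_le_of_ne {w z c : α} (hw : w ⋖ c) (hz : z ⋖ c) (hne : w ≠ z) : ¬ w ≤ z :=
  fun h => hw.2 (lt_of_le_of_ne h hne) hz.lt

theorem exists_covBy_ge_of_not_le {p : α} (hp : IsChain (· ≤ ·) (Set.Ici p))
    (hcover : ∀ a, p ≤ a ∨ ∃ z, z ⋖ p ∧ a ≤ z) {a b : α} (hab : ¬ a ≤ b) (hba : ¬ b ≤ a) :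
    ∃ z, z ⋖ p ∧ a ≤ z := by
  refine (hcover a).resolve_left fun hpa => ?_
  rcases hcover b with hpb | ⟨z, hz, hbz⟩
  · exact (hp.total hpa hpb).elim hab hba
  · exact hba (hbz.trans (hz.le.trans hpa))

variable [Finite α]

theorem IsChain.exists_fin_enum_Ici [OrderTop α] {p : α} (hp : IsChain (· ≤ ·) (Set.Ici p)) :
    ∃ (m : ℕ) (x : Fin (m+1) → α), (∀ i j, x i ≤ x j ↔ j ≤ i) ∧ Set.range x = Set.Ici p ∧
      x 0 = ⊤ ∧ x (Fin.last m) = p := by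
  obtain ⟨m, x, hx, hrange⟩ := hp.exists_fin_enum (Set.toFinite _) ⟨p, le_rfl⟩
  have hmem : ∀ a, p ≤ a → ∃ i, x i = a := fun a ha => hrange.symm.subset ha
  obtain ⟨i, hi⟩ := hmem ⊤ le_top
  obtain ⟨j, hj⟩ := hmem p le_rfl
  have hlast : p ≤ x (Fin.last m) := hrange.subset ⟨_, rfl⟩
  exact ⟨m, x, hx, hrange, top_unique (hi ▸ (hx i 0).2 (Fin.zero_le i)),
    le_antisymm (hj ▸ (hx _ j).2 (Fin.le_last j)) hlast⟩

theorem le_or_exists_covBy_ge {p : α} (hcomp : ∀ a, a ≤ p ∨ p ≤ a) (a : α) :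
    p ≤ a ∨ ∃ z, z ⋖ p ∧ a ≤ z := by
  rcases hcomp a with hap | hpa
  · rcases hap.eq_or_lt with rfl | hlt
    · exact Or.inl le_rfl
    · obtain ⟨z, haz, hz⟩ := exists_le_covBy_of_lt hlt
      exact Or.inr ⟨z, hz, haz⟩
  · exact Or.inl hpa

theorem exists_nontrivial_lowerCovers_of_not_le {a b c : α} (hac : a ≤ c) (hbc : b ≤ c)
    (hab : ¬ a ≤ b) (hba : ¬ b ≤ a) :
    ∃ d, a ≤ d ∧ b ≤ d ∧ {w | w ⋖ d}.Nontrivial := by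
  obtain ⟨d, ⟨had, hbd⟩, hmin⟩ :=
    Set.Finite.exists_minimal (Set.toFinite {d | a ≤ d ∧ b ≤ d}) ⟨c, hac, hbc⟩
  obtain ⟨u, hau, hud⟩ := exists_le_covBy_of_lt (lt_of_le_of_ne had (by rintro rfl; exact hba hbd))
  obtain ⟨v, hbv, hvd⟩ := exists_le_covBy_of_lt (lt_of_le_of_ne hbd (by rintro rfl; exact hab had))
  refine ⟨d, had, hbd, u, hud, v, hvd, ?_⟩
  rintro rfl
  exact hud.lt.not_ge (hmin ⟨hau, hbv⟩ hud.le)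

theorem le_or_ge_of_forall_nontrivial_lowerCovers [OrderTop α] {p : α}
    (hp : ∀ d, {w | w ⋖ d}.Nontrivial → p ≤ d → d ≤ p) (a : α) : a ≤ p ∨ p ≤ a := by
  by_contra! h
  obtain ⟨d, had, hpd, hd⟩ := exists_nontrivial_lowerCovers_of_not_le le_top le_top h.1 h.2
  exact h.1 (had.trans (hp d hd hpd))

theorem exists_greatest_nontrivial_lowerCovers_or_isBot [OrderTop α] :
    ∃ p : α, (∀ a, a ≤ p ∨ p ≤ a) ∧ (∀ c, {w | w ⋖ c}.Nontrivial → c ≤ p) ∧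
      ({w | w ⋖ p}.Nontrivial ∨ IsBot p) := by
  by_cases hB : {c : α | {w | w ⋖ c}.Nontrivial}.Nonempty
  · obtain ⟨p, hp⟩ := Set.Finite.exists_maximal (Set.toFinite _) hB
    have hcomp := le_or_ge_of_forall_nontrivial_lowerCovers fun d hd => hp.2 hd
    exact ⟨p, hcomp, fun c hc => (hcomp c).elim id (hp.2 hc), Or.inl hp.1⟩
  · have hB' : ∀ c : α, ¬ {w | w ⋖ c}.Nontrivial := fun c hc => hB ⟨c, hc⟩
    obtain ⟨p, -, hp⟩ := Set.Finite.exists_minimal (Set.toFinite (Set.univ : Set α)) ⟨⊤, trivial⟩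
    have hcomp := le_or_ge_of_forall_nontrivial_lowerCovers (p := p) fun d hd => (hB' d hd).elim
    exact ⟨p, hcomp, fun c hc => (hB' c hc).elim,
      Or.inr fun a => (hcomp a).elim (hp trivial) id⟩

end PartialOrder

namespace Paper

variable {α : Type*} [PartialOrder α]

theorem combLE_antisymm {n : ℕ} {a b : Fin n ⊕ Fin n} (hab : combLE n a b)
    (hba : combLE n b a) : a = b := by
  rcases a with i | i <;> rcases b with j | j <;> simp_all [combLE, le_antisymm_iff]

theorem injective_of_combLE_iff {n : ℕ} {f : Fin n ⊕ Fin n → α}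
    (hf : ∀ a b, combLE n a b ↔ f a ≤ f b) : Function.Injective f :=
  fun a b h => combLE_antisymm ((hf a b).2 h.le) ((hf b a).2 h.ge)

theorem combLE_map_castSucc_iff {n : ℕ} (a b : Fin n ⊕ Fin n) :
    combLE (n+1) (Sum.map Fin.castSucc Fin.castSucc a) (Sum.map Fin.castSucc Fin.castSucc b) ↔
      combLE n a b := by
  rcases a with i | i <;> rcases b with j | j <;> simp [combLE]

theorem combLE_map_castSucc_inl_castSucc_last {k : ℕ} (a : Fin (k+1) ⊕ Fin (k+1)) :
    combLE (k+2) (Sum.map Fin.castSucc Fin.castSucc a) (.inl (Fin.last k).castSucc) := by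
  rcases a with i | i <;> simp [combLE, Fin.le_last]

def combSnoc {n : ℕ} (f : Fin n ⊕ Fin n → α) (s t : α) : Fin (n+1) ⊕ Fin (n+1) → α :=
  Sum.elim (Fin.lastCases s (f ∘ Sum.inl)) (Fin.lastCases t (f ∘ Sum.inr))

theorem combLE_combSnoc_iff {n : ℕ} {f : Fin n ⊕ Fin n → α}
    (hf : ∀ a b, combLE n a b ↔ f a ≤ f b) {s t : α} (hfs : ∀ a, f a < s) (hts : t < s)
    (hft : ∀ a, ¬ f a ≤ t ∧ ¬ t ≤ f a) :
    ∀ a b, combLE (n+1) a b ↔ combSnoc f s t a ≤ combSnoc f s t b := by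
  rintro a b
  rcases a with i | i <;> rcases b with j | j <;>
    induction i using Fin.lastCases <;> induction j using Fin.lastCases <;>
    simp [combSnoc, combLE, ← hf, hft, (hfs _).le, (hfs _).not_ge, hts.le, hts.not_ge,
      Fin.le_last, (Fin.castSucc_lt_last _).ne']

theorem combLE_combSnoc_iff_of_covBy (hα : ∀ a : α, IsChain (· ≤ ·) (Set.Ici a)) {n : ℕ}
    {f : Fin n ⊕ Fin n → α} (hf : ∀ a b, combLE n a b ↔ f a ≤ f b) {p z w : α} (hz : z ⋖ p)
    (hw : w ⋖ p) (hwz : w ≠ z) (hfz : ∀ a, f a ≤ z) :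
    ∀ a b, combLE (n+1) a b ↔ combSnoc f p w a ≤ combSnoc f p w b := by
  refine combLE_combSnoc_iff hf (fun a => (hfz a).trans_lt hz.lt) hw.lt fun a => ⟨fun haw => ?_,
    fun hwa => hw.not_le_of_ne hz hwz (hwa.trans (hfz a))⟩
  rcases (hα (f a)).total (hfz a) haw with hzw | hwz'
  · exact hz.not_le_of_ne hw hwz.symm hzw
  · exact hw.not_le_of_ne hz hwz hwz'

theorem exists_covBy_forall_map_castSucc_le {k : ℕ} {g : Fin (k+2) ⊕ Fin (k+2) → α}
    (hg : ∀ a b, combLE (k+2) a b ↔ g a ≤ g b) {p : α} (hp : IsChain (· ≤ ·) (Set.Ici p))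
    (hcover : ∀ a, p ≤ a ∨ ∃ z, z ⋖ p ∧ a ≤ z) :
    ∃ z, z ⋖ p ∧ ∀ a, g (Sum.map Fin.castSucc Fin.castSucc a) ≤ z := by
  obtain ⟨z, hz, hgz⟩ := exists_covBy_ge_of_not_le hp hcover
    (a := g (.inl (Fin.last k).castSucc)) (b := g (.inr (Fin.last (k+1))))
    (by simp [← hg, combLE]) (by simp [← hg, combLE])
  exact ⟨z, hz, fun a => ((hg _ _).1 (combLE_map_castSucc_inl_castSucc_last a)).trans hgz⟩

theorem immPred_iff_covBy {X : FinOrd} [PartialOrder X.carrier] (hle : ∀ a b, X.le a b ↔ a ≤ b)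
    {x z : X.carrier} : ImmPred X x z ↔ x ⋖ z := by
  simp only [ImmPred, hle, covBy_iff_lt_and_eq_or_eq, lt_iff_le_and_ne, and_assoc]

theorem twoPreds_iff {X : FinOrd} [PartialOrder X.carrier] (hle : ∀ a b, X.le a b ↔ a ≤ b)
    {z : X.carrier} : TwoPreds X z ↔ {w | w ⋖ z}.Nontrivial := by
  simp only [TwoPreds, immPred_iff_covBy hle]
  exact ⟨fun ⟨w, w', hne, hw, hw'⟩ => ⟨w, hw, w', hw', hne⟩,
    fun ⟨w, hw, w', hw', hne⟩ => ⟨w, w', hne, hw, hw'⟩⟩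

/-- Let `n ≥ 1`. A finite co-tree `X` admits no order embedding of the
`(n+1)`-comb iff it decomposes as a chain `x 0 > x 1 > ⋯ > x m` (with `x 0` the
co-root) together with the principal downsets of the immediate predecessors of
`x m`, where `x m` is the greatest element with more than one immediate
predecessor (or the minimum of `X` if `X` is a chain), and each such principal
downset admits no order embedding of the `n`-comb. -/
theorem stmt_17 (n : ℕ) (hn : 1 ≤ n) (X : FinOrd) (hX : X.IsCoTree) :
    ¬ Embeds (comb (n+1)) X ↔
      ∃ (m : ℕ) (x : Fin (m+1) → X.carrier),
        (∀ i j, X.le (x i) (x j) ↔ j ≤ i) ∧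
        (∀ a, X.le a (x 0)) ∧
        (∀ z, TwoPreds X z → X.le z (x (Fin.last m))) ∧
        (TwoPreds X (x (Fin.last m)) ∨ ∀ a, X.le (x (Fin.last m)) a) ∧
        (∀ a, (∃ i, a = x i) ∨ ∃ z, ImmPred X z (x (Fin.last m)) ∧ X.le a z) ∧
        (∀ z, ImmPred X z (x (Fin.last m)) →
          ¬ EmbedsIn (comb n) X {a | X.le a z}) := by
  obtain ⟨⟨hrefl, htrans, hanti⟩, ⟨t, ht⟩, hup⟩ := hX
  have := X.fin
  let : PartialOrder X.carrier :=
    { le := X.le, le_refl := hrefl, le_trans := htrans, le_antisymm := hanti }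
  let : OrderTop X.carrier := { top := t, le_top := ht }
  have hle : ∀ a b, X.le a b ↔ a ≤ b := fun _ _ => Iff.rfl
  have hchain (a : X.carrier) : IsChain (· ≤ ·) (Set.Ici a) := fun _ hb _ hc _ => hup a _ _ hb hc
  simp only [Embeds, EmbedsIn, comb, twoPreds_iff hle, immPred_iff_covBy hle, hle]
  constructor
  · intro hemb
    obtain ⟨p, hcomp, hbranch, hp⟩ :=
      exists_greatest_nontrivial_lowerCovers_or_isBot (α := X.carrier)
    obtain ⟨m, x, hx, hrange, htop, hlast⟩ := (hchain p).exists_fin_enum_Ici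
    refine ⟨m, x, ?_⟩
    rw [hlast]
    refine ⟨hx, fun a => htop ▸ le_top, hbranch, hp, fun a => ?_, ?_⟩
    · exact (le_or_exists_covBy_ge hcomp a).imp
        (fun hpa => (hrange.symm.subset hpa).imp fun _ => Eq.symm) id
    · rintro z hz ⟨f, -, hfz, hf⟩
      obtain ⟨w, hw, hwz⟩ := (hp.resolve_right fun hbot => hz.lt.not_ge (hbot z)).exists_ne z
      have hg := combLE_combSnoc_iff_of_covBy hchain hf hz hw hwz hfz
      exact hemb ⟨_, injective_of_combLE_iff hg, hg⟩
  · rintro ⟨m, x, hx, -, -, -, hcover, hdown⟩ ⟨g, -, hg⟩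
    obtain ⟨k, rfl⟩ : ∃ k, n = k + 1 := ⟨n - 1, by omega⟩
    obtain ⟨z, hz, hgz⟩ := exists_covBy_forall_map_castSucc_le hg (hchain _) fun a =>
      (hcover a).imp (fun ⟨i, hi⟩ => hi ▸ (hx _ _).2 (Fin.le_last i)) id
    have hres a b := (combLE_map_castSucc_iff a b).symm.trans (hg _ _)
    exact hdown z hz ⟨_, injective_of_combLE_iff hres, hgz, hres⟩

end Paper
end

section
/- The map π sending a finite co-tree X in T_{n+1} with decomposition (upper chain-with-fan τ(m,k), lower multiset [↓y_0,...,↓y_k] of members of T_n) to the pair (τ(m,k), [↓y_0,...,↓y_k]) is order-reflecting from (T_{n+1}, ≤_p) to (T_2, ≤_p) × (T_n^#, <<): if τ(m,k) ≤_p τ(m',k') and [Y_0,...,Y_k] << [Y_0',...,Y_{k'}'], then X is a bi-p-morphic image of X'. -/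
namespace Paper

/-- The subposet of `X` on the subset `S`. -/
def FinOrd.sub (X : FinOrd) (S : Set X.carrier) : FinOrd where
  carrier := {a // a ∈ S}
  fin := by have := X.fin; exact Subtype.finite
  le a b := X.le a.1 b.1

/-- A decomposition of the co-tree `X` as in Figure 5: a chain
`x 0 > ⋯ > x m` headed by the co-root `x 0`, and the points `y 0, …, y k`
enumerating (without repetitions) the immediate predecessors of `x m`, whose
principal downsets cover the rest of `X`. -/
def Decomp (X : FinOrd) (m k : ℕ) (x : Fin (m+1) → X.carrier)
    (y : Fin (k+1) → X.carrier) : Prop :=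
  (∀ i j, X.le (x i) (x j) ↔ j ≤ i) ∧
  (∀ a, X.le a (x 0)) ∧
  Function.Injective y ∧
  (∀ i, ImmPred X (y i) (x (Fin.last m))) ∧
  (∀ z, ImmPred X z (x (Fin.last m)) → ∃ i, z = y i) ∧
  (∀ a, (∃ i, a = x i) ∨ ∃ i, X.le a (y i))

/-- The lower part of the decomposition: the finite multiset `[↓y 0, …, ↓y k]`. -/
def lowerPart (X : FinOrd) {k : ℕ} (y : Fin (k+1) → X.carrier) :
    Multiset FinOrd :=
  (Finset.univ.val.map fun i : Fin (k+1) => X.sub {a | X.le a (y i)})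

end Paper

/-!
`X'` is the disjoint union of its chain `x' 0 > ⋯ > x' m'` and the downsets `↓y' j`, and
likewise for `X`. A bi-p-morphism `τ(m',k') ↠ τ(m,k)` sends the minimal points `y'` to minimal
points, so the chain `x` is covered by the image of the chain `x'` and `m ≤ m'`; hence
`x' i ↦ x (min i m)` is a surjective bi-p-morphism of chains. The multiset projectivity provides a
surjection `σ` of indices and surjective bi-p-morphisms `↓y' j ↠ ↓y (σ j)`. Gluing these maps
gives `X' ↠ X`; the back-and-forth conditions reduce to those of the pieces because in a co-tree
every point above some `a ≤ y i` is either below `y i` or on the chain.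
-/

namespace Multiset

variable {α β : Type*}

theorem exists_fin_of_rel_univ :
    ∀ {n : ℕ} {r : β → Fin n → Prop} {s : Multiset β}, Rel r s Finset.univ.val →
      ∃ c : Fin n → β, Finset.univ.val.map c = s ∧ ∀ j, r (c j) j
  | 0, _, _, h => ⟨Fin.elim0, (rel_zero_right.1 h).symm, fun j => j.elim0⟩
  | _ + 1, _, _, h => by
    rw [Fin.univ_succ, Finset.cons_val, Finset.map_val, rel_cons_right] at h
    obtain ⟨b, s, hb, hs, rfl⟩ := h
    obtain ⟨c, rfl, hc⟩ := exists_fin_of_rel_univ (rel_map_right.1 hs)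
    refine ⟨Fin.cons b c, ?_, Fin.cases hb hc⟩
    simp [Fin.univ_succ, Finset.map_val, Function.comp_def]

theorem exists_fin_of_map_eq {n : ℕ} {s : Multiset β} {f : β → α} {v : Fin n → α}
    (h : s.map f = Finset.univ.val.map v) :
    ∃ c : Fin n → β, Finset.univ.val.map c = s ∧ ∀ j, f (c j) = v j :=
  exists_fin_of_rel_univ (rel_map.1 (rel_eq.2 h))

end Multiset

@[simp]
theorem Fin.clamp_val {m : ℕ} (s : Fin (m+1)) : Fin.clamp s m = s :=
  Fin.ext (by simp [Nat.lt_succ_iff.mp s.2])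

namespace Paper

theorem MProj.exists_surjective {α : Type*} {r : α → α → Prop} {n n' : ℕ}
    {u : Fin n → α} {v : Fin n' → α}
    (h : MProj r (Finset.univ.val.map u) (Finset.univ.val.map v)) :
    ∃ σ : Fin n' → Fin n, Function.Surjective σ ∧ ∀ j, r (u (σ j)) (v j) := by
  obtain ⟨L, hfst, hsum, hL⟩ := h
  obtain ⟨c, rfl, hc⟩ := Multiset.exists_fin_of_map_eq hfst
  have hcL : ∀ i, c i ∈ Finset.univ.val.map c := fun i =>
    Multiset.mem_map_of_mem c (Finset.mem_univ_val i)
  -- tag every element of the fiber `(c i).2` over `u i` with its index `i`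
  set P := Finset.univ.val.bind fun i => (c i).2.map (Prod.mk i)
  have mem_P : ∀ q, q ∈ P ↔ q.2 ∈ (c q.1).2 := by
    rintro ⟨i, p⟩
    simp [P, Multiset.mem_bind]
  have hP : P.map Prod.snd = Finset.univ.val.map v := by
    rw [← hsum, Multiset.map_bind]
    simp [Multiset.bind, Multiset.join, Function.comp_def]
  obtain ⟨d, hdP, hdv⟩ := Multiset.exists_fin_of_map_eq hP
  refine ⟨fun j => (d j).1, fun i => ?_, fun j => ?_⟩
  · obtain ⟨p, hp⟩ := Multiset.exists_mem_of_ne_zero (hL _ (hcL i)).1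
    obtain ⟨j, -, hj⟩ := Multiset.mem_map.1 (hdP ▸ (mem_P (i, p)).2 hp)
    exact ⟨j, congrArg Prod.fst hj⟩
  · have hdj : d j ∈ P := hdP ▸ Multiset.mem_map_of_mem d (Finset.mem_univ_val j)
    rw [← hc, ← hdv]
    exact (hL _ (hcL _)).2 _ ((mem_P _).1 hdj)

theorem IsBiPMorphism.tau_inr {m k m' k' : ℕ} {g : (tau m' k').carrier → (tau m k).carrier}
    (hg : IsBiPMorphism (tau m' k') (tau m k) g) (t : Fin (k'+1)) :
    ∃ s, g (Sum.inr t) = Sum.inr s := by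
  rcases hgt : g (Sum.inr t) with i | s
  · -- `y_0 < x_i` would have to be the image of a point below the minimal point `y_t`
    obtain ⟨z, hz, hgz⟩ := hg.2.2 (Sum.inr t) (Sum.inr 0) (by rw [hgt]; trivial)
    rcases z with _ | t'
    · exact hz.elim
    · obtain rfl : t' = t := hz
      rw [hgt] at hgz
      cases hgz
  · exact ⟨s, rfl⟩

theorem PImage.tau_le {m k m' k' : ℕ} (h : PImage (tau m k) (tau m' k')) : m ≤ m' := by
  obtain ⟨g, hsurj, hg⟩ := h
  have hchain : ∀ i : Fin (m+1), ∃ b, g (Sum.inl b) = Sum.inl i := by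
    intro i
    obtain ⟨z | t, hz⟩ := hsurj (Sum.inl i)
    · exact ⟨z, hz⟩
    · obtain ⟨s, hs⟩ := hg.tau_inr t
      cases hs.symm.trans hz
  choose b hb using hchain
  have hb_inj : Function.Injective b := fun i i' he =>
    Sum.inl_injective ((hb i).symm.trans (he ▸ hb i'))
  simpa using Fintype.card_le_of_injective b hb_inj

namespace FinOrd.IsCoTree

variable {X : FinOrd}

theorem refl (hX : X.IsCoTree) (a : X.carrier) : X.le a a := hX.1.1 a

theorem trans (hX : X.IsCoTree) {a b c : X.carrier} : X.le a b → X.le b c → X.le a c :=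
  hX.1.2.1 a b c

theorem antisymm (hX : X.IsCoTree) {a b : X.carrier} : X.le a b → X.le b a → a = b :=
  hX.1.2.2 a b

theorem total_of_le_of_le (hX : X.IsCoTree) {a b c : X.carrier} :
    X.le a b → X.le a c → X.le b c ∨ X.le c b :=
  hX.2.2 a b c

end FinOrd.IsCoTree

namespace Decomp

variable {X : FinOrd} {m k : ℕ} {x : Fin (m+1) → X.carrier} {y : Fin (k+1) → X.carrier}

theorem x_le_x_iff (hd : Decomp X m k x y) (i j : Fin (m+1)) : X.le (x i) (x j) ↔ j ≤ i :=
  hd.1 i j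

theorem immPred_y (hd : Decomp X m k x y) (i : Fin (k+1)) : ImmPred X (y i) (x (Fin.last m)) :=
  hd.2.2.2.1 i

theorem eq_x_or_le_y (hd : Decomp X m k x y) (a : X.carrier) :
    (∃ i, a = x i) ∨ ∃ i, X.le a (y i) :=
  hd.2.2.2.2.2 a

theorem y_injective (hd : Decomp X m k x y) : Function.Injective y := hd.2.2.1

theorem x_injective (hX : X.IsCoTree) (hd : Decomp X m k x y) : Function.Injective x :=
  fun i j he => le_antisymm ((hd.x_le_x_iff j i).1 (he ▸ hX.refl _))
    ((hd.x_le_x_iff i j).1 (he ▸ hX.refl _))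

theorem y_le_x (hX : X.IsCoTree) (hd : Decomp X m k x y) (i : Fin (k+1)) (j : Fin (m+1)) :
    X.le (y i) (x j) :=
  hX.trans (hd.immPred_y i).1 ((hd.x_le_x_iff _ j).2 (Fin.le_last j))

theorem not_x_le_y (hX : X.IsCoTree) (hd : Decomp X m k x y) (i : Fin (m+1))
    (j : Fin (k+1)) : ¬ X.le (x i) (y j) := by
  intro hle
  obtain rfl : i = Fin.last m :=
    le_antisymm (Fin.le_last i) ((hd.x_le_x_iff _ _).1 (hX.trans hle (hd.immPred_y j).1))
  exact (hd.immPred_y j).2.1 (hX.antisymm (hd.immPred_y j).1 hle)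

theorem eq_of_le_y (hX : X.IsCoTree) (hd : Decomp X m k x y) {a : X.carrier}
    {i j : Fin (k+1)} (hi : X.le a (y i)) (hj : X.le a (y j)) : i = j := by
  have y_le_y : ∀ i j, X.le (y i) (y j) → i = j := fun i j hle =>
    ((hd.immPred_y i).2.2 _ hle (hd.immPred_y j).1).elim (fun h => hd.y_injective h.symm)
      fun h => ((hd.immPred_y j).2.1 h).elim
  exact (hX.total_of_le_of_le hi hj).elim (y_le_y i j) fun h => (y_le_y j i h).symm

theorem eq_y_or_eq_x_of_y_le (hX : X.IsCoTree) (hd : Decomp X m k x y) {i : Fin (k+1)}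
    {b : X.carrier} (hle : X.le (y i) b) : b = y i ∨ ∃ t, b = x t := by
  refine (hd.eq_x_or_le_y b).symm.imp (fun ⟨j, hj⟩ => ?_) id
  obtain rfl := hd.eq_of_le_y hX (hX.refl (y i)) (hX.trans hle hj)
  exact hX.antisymm hj hle

theorem exists_eq_x_of_x_le (hX : X.IsCoTree) (hd : Decomp X m k x y) {t : Fin (m+1)}
    {b : X.carrier} (hle : X.le (x t) b) : ∃ s ≤ t, b = x s := by
  rcases hd.eq_x_or_le_y b with ⟨s, rfl⟩ | ⟨j, hj⟩
  · exact ⟨s, (hd.x_le_x_iff t s).1 hle, rfl⟩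
  · exact (hd.not_x_le_y hX t j (hX.trans hle hj)).elim

end Decomp

/-- `lowerPart X y << lowerPart X' y'` with the multiset map given on indices by `σ`. -/
structure LowerProjection (X X' : FinOrd) {k k' : ℕ} (y : Fin (k+1) → X.carrier)
    (y' : Fin (k'+1) → X'.carrier) where
  σ : Fin (k'+1) → Fin (k+1)
  surjective_σ : Function.Surjective σ
  f : ∀ j, (X'.sub {a | X'.le a (y' j)}).carrier → (X.sub {a | X.le a (y (σ j))}).carrier
  surjective_f : ∀ j, Function.Surjective (f j)
  isBiPMorphism_f : ∀ j, IsBiPMorphism _ _ (f j)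

theorem MProj.lowerProjection {X X' : FinOrd} {k k' : ℕ} {y : Fin (k+1) → X.carrier}
    {y' : Fin (k'+1) → X'.carrier} (h : MProj PImage (lowerPart X y) (lowerPart X' y')) :
    Nonempty (LowerProjection X X' y y') := by
  obtain ⟨σ, hσ, hf⟩ := MProj.exists_surjective h
  choose f hf using hf
  exact ⟨⟨σ, hσ, f, fun j => (hf j).1, fun j => (hf j).2⟩⟩

namespace LowerProjection

variable {X X' : FinOrd} {m k m' k' : ℕ}
  {x : Fin (m+1) → X.carrier} {y : Fin (k+1) → X.carrier}
  {x' : Fin (m'+1) → X'.carrier} {y' : Fin (k'+1) → X'.carrier}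

open Classical in
noncomputable def glue (P : LowerProjection X X' y y') (x : Fin (m+1) → X.carrier)
    (x' : Fin (m'+1) → X'.carrier) (a : X'.carrier) : X.carrier :=
  if ha : ∃ j, X'.le a (y' j) then (P.f ha.choose ⟨a, ha.choose_spec⟩).val
  else if ha' : ∃ i, a = x' i then x (Fin.clamp ha'.choose m)
  else x 0

variable (P : LowerProjection X X' y y')

theorem glue_of_le_y (hX' : X'.IsCoTree) (hd' : Decomp X' m' k' x' y') {a : X'.carrier}
    {j : Fin (k'+1)} (ha : X'.le a (y' j)) : P.glue x x' a = (P.f j ⟨a, ha⟩).val := by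
  have hex : ∃ j, X'.le a (y' j) := ⟨j, ha⟩
  rw [glue, dif_pos hex]
  obtain rfl := hd'.eq_of_le_y hX' hex.choose_spec ha
  rfl

theorem glue_x (hX' : X'.IsCoTree) (hd' : Decomp X' m' k' x' y') (i : Fin (m'+1)) :
    P.glue x x' (x' i) = x (Fin.clamp i m) := by
  have hnot : ¬ ∃ j, X'.le (x' i) (y' j) := fun ⟨j, hj⟩ => hd'.not_x_le_y hX' i j hj
  have hex : ∃ i', x' i = x' i' := ⟨i, rfl⟩
  rw [glue, dif_neg hnot, dif_pos hex, ← hd'.x_injective hX' hex.choose_spec]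

theorem glue_le_y (hX' : X'.IsCoTree) (hd' : Decomp X' m' k' x' y') {a : X'.carrier}
    {j : Fin (k'+1)} (ha : X'.le a (y' j)) : X.le (P.glue x x' a) (y (P.σ j)) := by
  rw [P.glue_of_le_y hX' hd' ha]
  exact (P.f j ⟨a, ha⟩).2

theorem glue_val (hX' : X'.IsCoTree) (hd' : Decomp X' m' k' x' y') {j : Fin (k'+1)}
    (z : (X'.sub {a | X'.le a (y' j)}).carrier) : P.glue x x' z.val = (P.f j z).val :=
  P.glue_of_le_y hX' hd' z.2

theorem glue_surjective (hX' : X'.IsCoTree) (hd : Decomp X m k x y)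
    (hd' : Decomp X' m' k' x' y') (hm : m ≤ m') : Function.Surjective (P.glue x x') := by
  intro c
  rcases hd.eq_x_or_le_y c with ⟨t, rfl⟩ | ⟨i, hc⟩
  · exact ⟨x' (Fin.castLE (by omega) t), by simp [P.glue_x hX' hd']⟩
  · obtain ⟨j, rfl⟩ := P.surjective_σ i
    obtain ⟨w, hw⟩ := P.surjective_f j ⟨c, hc⟩
    exact ⟨w.val, (P.glue_val hX' hd' w).trans (congrArg Subtype.val hw)⟩

theorem glue_mono (hX : X.IsCoTree) (hX' : X'.IsCoTree) (hd : Decomp X m k x y)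
    (hd' : Decomp X' m' k' x' y') {a b : X'.carrier} (hab : X'.le a b) :
    X.le (P.glue x x' a) (P.glue x x' b) := by
  rcases hd'.eq_x_or_le_y a with ⟨i, rfl⟩ | ⟨j, ha⟩ <;>
    rcases hd'.eq_x_or_le_y b with ⟨i', rfl⟩ | ⟨j', hb⟩
  · rw [P.glue_x hX' hd', P.glue_x hX' hd', hd.x_le_x_iff]
    exact Fin.clamp_monotone ((hd'.x_le_x_iff i i').1 hab)
  · exact (hd'.not_x_le_y hX' i j' (hX'.trans hab hb)).elim
  · rw [P.glue_x hX' hd']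
    exact hX.trans (P.glue_le_y hX' hd' ha) (hd.y_le_x hX _ _)
  · obtain rfl := hd'.eq_of_le_y hX' ha (hX'.trans hab hb)
    rw [P.glue_of_le_y hX' hd' ha, P.glue_of_le_y hX' hd' hb]
    exact (P.isBiPMorphism_f j).1 ⟨a, ha⟩ ⟨b, hb⟩ hab

theorem glue_forth (hX : X.IsCoTree) (hX' : X'.IsCoTree) (hd : Decomp X m k x y)
    (hd' : Decomp X' m' k' x' y') (hm : m ≤ m') {a : X'.carrier} {c : X.carrier}
    (hc : X.le (P.glue x x' a) c) : ∃ z, X'.le a z ∧ P.glue x x' z = c := by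
  rcases hd'.eq_x_or_le_y a with ⟨i, rfl⟩ | ⟨j, ha⟩
  · rw [P.glue_x hX' hd'] at hc
    obtain ⟨s, hs, rfl⟩ := hd.exists_eq_x_of_x_le hX hc
    refine ⟨x' (Fin.castLE (by omega) s), (hd'.x_le_x_iff _ _).2 ?_, by simp [P.glue_x hX' hd']⟩
    rw [Fin.le_def] at hs ⊢
    simp only [Fin.coe_clamp, Fin.val_castLE] at hs ⊢
    omega
  · rw [P.glue_of_le_y hX' hd' ha] at hc
    by_cases hcy : X.le c (y (P.σ j))
    · obtain ⟨z, hz, hfz⟩ := (P.isBiPMorphism_f j).2.1 ⟨a, ha⟩ ⟨c, hcy⟩ hc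
      exact ⟨z.val, hz, (P.glue_val hX' hd' z).trans (congrArg Subtype.val hfz)⟩
    · have hyc : X.le (y (P.σ j)) c :=
        (hX.total_of_le_of_le (P.f j ⟨a, ha⟩).2 hc).resolve_right hcy
      obtain ⟨t, rfl⟩ :=
        (hd.eq_y_or_eq_x_of_y_le hX hyc).resolve_left fun h => hcy (h ▸ hX.refl _)
      exact ⟨x' (Fin.castLE (by omega) t), hX'.trans ha (hd'.y_le_x hX' j _),
        by simp [P.glue_x hX' hd']⟩

theorem glue_back (hX : X.IsCoTree) (hX' : X'.IsCoTree) (hd : Decomp X m k x y)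
    (hd' : Decomp X' m' k' x' y') (hm : m ≤ m') {a : X'.carrier} {c : X.carrier}
    (hc : X.le c (P.glue x x' a)) : ∃ z, X'.le z a ∧ P.glue x x' z = c := by
  rcases hd'.eq_x_or_le_y a with ⟨i, rfl⟩ | ⟨j, ha⟩
  · rw [P.glue_x hX' hd'] at hc
    rcases hd.eq_x_or_le_y c with ⟨t, rfl⟩ | ⟨t, hct⟩
    · have hit := (hd.x_le_x_iff _ _).1 hc
      refine ⟨x' (max i (Fin.castLE (by omega) t)),
        (hd'.x_le_x_iff _ _).2 (le_max_left _ _), ?_⟩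
      rw [P.glue_x hX' hd']
      congr 1
      rw [Fin.le_def] at hit
      ext
      simp only [Fin.coe_clamp, Fin.coe_max, Fin.val_castLE] at hit ⊢
      omega
    · obtain ⟨j, rfl⟩ := P.surjective_σ t
      obtain ⟨w, hw⟩ := P.surjective_f j ⟨c, hct⟩
      exact ⟨w.val, hX'.trans w.2 (hd'.y_le_x hX' j i),
        (P.glue_val hX' hd' w).trans (congrArg Subtype.val hw)⟩
  · rw [P.glue_of_le_y hX' hd' ha] at hc
    obtain ⟨z, hz, hfz⟩ :=
      (P.isBiPMorphism_f j).2.2 ⟨a, ha⟩ ⟨c, hX.trans hc (P.f j ⟨a, ha⟩).2⟩ hc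
    exact ⟨z.val, hz, (P.glue_val hX' hd' z).trans (congrArg Subtype.val hfz)⟩

theorem pImage (P : LowerProjection X X' y y') (hX : X.IsCoTree) (hX' : X'.IsCoTree)
    (hd : Decomp X m k x y) (hd' : Decomp X' m' k' x' y') (hm : m ≤ m') : PImage X X' :=
  ⟨P.glue x x', P.glue_surjective hX' hd hd' hm, fun _ _ => P.glue_mono hX hX' hd hd',
    fun _ _ => P.glue_forth hX hX' hd hd' hm, fun _ _ => P.glue_back hX hX' hd hd' hm⟩

end LowerProjection

theorem stmt_18_general (X X' : FinOrd)
    (hX : X.IsCoTree) (hX' : X'.IsCoTree)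
    (m k m' k' : ℕ)
    (x : Fin (m+1) → X.carrier) (y : Fin (k+1) → X.carrier)
    (x' : Fin (m'+1) → X'.carrier) (y' : Fin (k'+1) → X'.carrier)
    (hd : Decomp X m k x y) (hd' : Decomp X' m' k' x' y')
    (hτ : PImage (tau m k) (tau m' k'))
    (hms : MProj PImage (lowerPart X y) (lowerPart X' y')) :
    PImage X X' := by
  obtain ⟨P⟩ := hms.lowerProjection
  exact P.pImage hX hX' hd hd' hτ.tau_le

/-- The decomposition map `π : T_{n+1} → T_2 × T_n^#` is order reflecting: if
`τ(m,k) ≤ₚ τ(m',k')` and `[↓y 0,…,↓y k] << [↓y' 0,…,↓y' k']` (w.r.t. the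
multiset projectivity relation over `≤ₚ`), then `X` is a bi-p-morphic image
of `X'`. -/
theorem stmt_18 (n : ℕ) (hn : 1 ≤ n) (X X' : FinOrd)
    (hX : X.IsCoTree) (hX' : X'.IsCoTree)
    (hXn : ¬ Embeds (comb (n+1)) X) (hX'n : ¬ Embeds (comb (n+1)) X')
    (m k m' k' : ℕ)
    (x : Fin (m+1) → X.carrier) (y : Fin (k+1) → X.carrier)
    (x' : Fin (m'+1) → X'.carrier) (y' : Fin (k'+1) → X'.carrier)
    (hd : Decomp X m k x y) (hd' : Decomp X' m' k' x' y')
    (hτ : PImage (tau m k) (tau m' k'))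
    (hms : MProj PImage (lowerPart X y) (lowerPart X' y')) :
    PImage X X' :=
  stmt_18_general X X' hX hX' m k m' k' x y x' y' hd hd' hτ hms

end Paper
end
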